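/- arXiv:2509.17029 — 6 statements merged into one kernel-verified Lean document; each statement's English description precedes it below -/
import Mathlib

section
/- For all real x with 0 ≤ x ≤ 2 and all real y with 1 ≤ y ≤ 1 + x, we have exp((y-1)/y - 2(y-1)/x) · y^(2/x) ≤ 1.28 (with the convention that the expression equals 1 when x = 0 and y = 1). Consequently, ∫_1^{1+x} exp((y-1)/y - 2(y-1)/x) · y^(2/x) dy ≤ 1.28·x. -/
lemma exp_024_lb : (325:ℝ)/256 ≤ Real.exp 0.24 := by
  have h1 : (1.01:ℝ) ≤ Real.exp 0.01 := by
    have := Real.add_one_le_exp (0.01:ℝ); linarith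
  have h2 : Real.exp 0.24 = (Real.exp 0.01) ^ (24:ℕ) := by
    rw [← Real.exp_nat_mul]; norm_num
  calc (325:ℝ)/256 ≤ (1.01:ℝ) ^ (24:ℕ) := by norm_num
    _ ≤ (Real.exp 0.01) ^ (24:ℕ) := pow_le_pow_left₀ (by norm_num) h1 24
    _ = Real.exp 0.24 := h2.symm

lemma ptwise_bound (x y : ℝ) (hx0 : 0 < x) (hx2 : x ≤ 2) (hy1 : 1 ≤ y) :
    Real.exp ((y - 1) / y - 2 * (y - 1) / x) * y ^ (2 / x) ≤ 1.28 := by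
  have hy0 : (0:ℝ) < y := lt_of_lt_of_le one_pos hy1
  rw [Real.rpow_def_of_pos hy0, ← Real.exp_add]
  have hlog : Real.log y ≤ y - 1 := Real.log_le_sub_one_of_pos hy0
  have hxinv : 1 ≤ 2 / x := by rw [le_div_iff₀ hx0]; linarith
  have h2 : (2/x) * (Real.log y - (y-1)) ≤ Real.log y - (y-1) := by
    nlinarith [mul_nonneg (sub_nonneg.mpr hxinv) (sub_nonneg.mpr hlog)]
  have h3 : Real.log y ≤ Real.log (13/8) + 8*y/13 - 1 := by
    have hpos : (0:ℝ) < 8*y/13 := by positivity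
    have := Real.log_le_sub_one_of_pos hpos
    rw [show (8*y/13 : ℝ) = y * ((13:ℝ)/8)⁻¹ by ring,
        Real.log_mul (ne_of_gt hy0) (by norm_num), Real.log_inv] at this
    linarith
  have h4 : (1.24:ℝ) ≤ 1/y + 5*y/13 := by
    have hu : y * (1/y) = 1 := mul_one_div_cancel (ne_of_gt hy0)
    nlinarith [sq_nonneg (y - 1.612), hy0, hu]
  have e1 : (y - 1) / y - 2 * (y - 1) / x + Real.log y * (2 / x)
      = (1 - 1/y) + (2/x) * (Real.log y - (y-1)) := by
    field_simp
    ring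
  have hS : (y - 1) / y - 2 * (y - 1) / x + Real.log y * (2 / x)
      ≤ Real.log (13/8) - 0.24 := by
    rw [e1]; linarith
  calc Real.exp ((y - 1) / y - 2 * (y - 1) / x + Real.log y * (2 / x))
      ≤ Real.exp (Real.log (13/8) - 0.24) := Real.exp_le_exp.mpr hS
    _ = (13/8) / Real.exp 0.24 := by
        rw [Real.exp_sub, Real.exp_log (by norm_num : (0:ℝ) < 13/8)]
    _ ≤ (13/8) / ((325:ℝ)/256) :=
        div_le_div_of_nonneg_left (by norm_num) (by norm_num) exp_024_lb
    _ = 1.28 := by norm_num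

theorem subcase_1_1_integrand_bound (x : ℝ) (hx0 : 0 ≤ x) (hx2 : x ≤ 2) :
    (∀ y : ℝ, 1 ≤ y → y ≤ 1 + x →
      Real.exp ((y - 1) / y - 2 * (y - 1) / x) * y ^ (2 / x) ≤ 1.28)
    ∧ (∫ y in (1:ℝ)..(1 + x),
        Real.exp ((y - 1) / y - 2 * (y - 1) / x) * y ^ (2 / x)) ≤ 1.28 * x := by
  have hpt : ∀ y : ℝ, 1 ≤ y → y ≤ 1 + x →
      Real.exp ((y - 1) / y - 2 * (y - 1) / x) * y ^ (2 / x) ≤ 1.28 := by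
    intro y hy1 hy2
    rcases eq_or_lt_of_le hx0 with h | h
    · have hy : y = 1 := le_antisymm (by linarith) hy1
      subst hy
      norm_num [Real.one_rpow]
    · exact ptwise_bound x y h hx2 hy1
  refine ⟨hpt, ?_⟩
  have hbound : ∀ y ∈ Set.uIoc (1:ℝ) (1 + x),
      ‖Real.exp ((y - 1) / y - 2 * (y - 1) / x) * y ^ (2 / x)‖ ≤ 1.28 := by
    intro y hy
    rw [Set.uIoc_of_le (by linarith : (1:ℝ) ≤ 1 + x)] at hy
    have h1 : (1:ℝ) ≤ y := le_of_lt hy.1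
    have hnn : 0 ≤ Real.exp ((y - 1) / y - 2 * (y - 1) / x) * y ^ (2 / x) :=
      mul_nonneg (Real.exp_nonneg _) (Real.rpow_nonneg (by linarith) _)
    rw [Real.norm_eq_abs, abs_of_nonneg hnn]
    exact hpt y h1 hy.2
  have := intervalIntegral.norm_integral_le_of_norm_le_const hbound
  calc (∫ y in (1:ℝ)..(1 + x),
        Real.exp ((y - 1) / y - 2 * (y - 1) / x) * y ^ (2 / x))
      ≤ ‖∫ y in (1:ℝ)..(1 + x),
        Real.exp ((y - 1) / y - 2 * (y - 1) / x) * y ^ (2 / x)‖ :=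
        le_abs_self _
    _ ≤ 1.28 * |1 + x - 1| := this
    _ = 1.28 * x := by rw [show (1:ℝ) + x - 1 = x by ring, abs_of_nonneg hx0]
end

section
/- For all real x with 0 < x ≤ 2, ((1+x)^2/(e^2·x)) · (e^{x/(1+x)} - 1) · (1+x)^{2/x} ≤ 1 + 0.72·x. -/
/-!
With `u = x / (1 + x)`, the estimate `log y ≤ sinh (log y) = (y - y⁻¹) / 2` at `y = 1 + x` gives
`(1 + x) ^ (2 / x) ≤ exp (2 - u)`, so the left-hand side is at most
`(1 + x) ^ 2 / x * (1 - exp (-u))`. The alternating Taylor bound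
`1 - exp (-u) ≤ u - u ^ 2 / 2 + u ^ 3 / 6` turns this into `1 + x / 2 + x ^ 2 / (6 * (1 + x))`,
which is below `1 + (1 / 2 + 1 / 6) * x`.
-/

open Real Set

namespace Real

theorem cubic_le_exp_neg_of_nonneg {u : ℝ} (hu : 0 ≤ u) :
    1 - u + u ^ 2 / 2 - u ^ 3 / 6 ≤ exp (-u) := by
  set f : ℝ → ℝ := fun t ↦ exp t * (1 - t + t ^ 2 / 2 - t ^ 3 / 6)
  -- the cubic `p` satisfies `p + p' = -t ^ 3 / 6`
  have hf : ∀ t, HasDerivAt f (-(exp t * t ^ 3 / 6)) t := fun t ↦ by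
    have hp : HasDerivAt (fun t ↦ 1 - t + t ^ 2 / 2 - t ^ 3 / 6) (-1 + t - t ^ 2 / 2) t := by
      have := (((hasDerivAt_id' t).const_sub 1).add (((hasDerivAt_id' t).pow 2).div_const 2)).sub
        (((hasDerivAt_id' t).pow 3).div_const 6)
      exact this.congr_deriv (by norm_num; ring)
    exact ((hasDerivAt_exp t).mul hp).congr_deriv (by ring)
  have hanti : AntitoneOn f (Ici 0) :=
    antitoneOn_of_deriv_nonpos (convex_Ici 0) (fun t _ ↦ (hf t).continuousAt.continuousWithinAt)
      (fun t _ ↦ (hf t).differentiableAt.differentiableWithinAt) fun t ht ↦ by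
        rw [interior_Ici, mem_Ioi] at ht
        rw [(hf t).deriv, neg_nonpos]
        positivity
  have hf_le_one : f u ≤ 1 := by simpa [f] using hanti self_mem_Ici hu hu
  rw [exp_neg, ← one_div, le_div_iff₀' (exp_pos u)]
  exact hf_le_one

theorem log_le_half_sub_inv {y : ℝ} (hy : 1 ≤ y) : log y ≤ (y - y⁻¹) / 2 := by
  rw [← sinh_log (by linarith)]
  exact self_le_sinh_iff.2 (log_nonneg hy)

theorem one_add_rpow_two_div_le {x : ℝ} (hx : 0 < x) :
    (1 + x) ^ (2 / x) ≤ exp (2 - x / (1 + x)) := by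
  rw [rpow_def_of_pos (by linarith), exp_le_exp]
  calc log (1 + x) * (2 / x) ≤ (1 + x - (1 + x)⁻¹) / 2 * (2 / x) := by
        gcongr; exact log_le_half_sub_inv (by linarith)
    _ = 2 - x / (1 + x) := by field_simp; ring

end Real

theorem subcase_1_1_second_bound_general (x : ℝ) (hx0 : 0 < x) :
    (1 + x) ^ 2 / (Real.exp 1 ^ 2 * x) * (Real.exp (x / (1 + x)) - 1)
      * (1 + x) ^ (2 / x) ≤ 1 + 0.72 * x := by
  set u := x / (1 + x) with hu_def
  have hu : 0 ≤ u := by positivity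
  have hexp_sub_one : 0 ≤ exp u - 1 := by linarith [one_le_exp hu]
  have hrpow : (1 + x) ^ (2 / x) / exp 1 ^ 2 ≤ exp (-u) := by
    have hexp : exp (2 - u) = exp 1 ^ 2 * exp (-u) := by
      rw [sub_eq_add_neg, exp_add, ← exp_nat_mul]; norm_num
    rw [div_le_iff₀' (by positivity), ← hexp]
    exact one_add_rpow_two_div_le hx0
  have htail : x ^ 2 / (6 * (1 + x)) ≤ x / 6 := by
    rw [div_le_div_iff₀ (by positivity) (by norm_num)]
    nlinarith
  calc (1 + x) ^ 2 / (exp 1 ^ 2 * x) * (exp u - 1) * (1 + x) ^ (2 / x)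
      = (1 + x) ^ 2 / x * (exp u - 1) * ((1 + x) ^ (2 / x) / exp 1 ^ 2) := by ring
    _ ≤ (1 + x) ^ 2 / x * (exp u - 1) * exp (-u) := by gcongr
    _ = (1 + x) ^ 2 / x * (1 - exp (-u)) := by rw [exp_neg]; field_simp
    _ ≤ (1 + x) ^ 2 / x * (u - u ^ 2 / 2 + u ^ 3 / 6) := by
        gcongr; linarith [cubic_le_exp_neg_of_nonneg hu]
    _ = 1 + x / 2 + x ^ 2 / (6 * (1 + x)) := by rw [hu_def]; field_simp; ring
    _ ≤ 1 + 0.72 * x := by linarith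

theorem subcase_1_1_second_bound (x : ℝ) (hx0 : 0 < x) (hx2 : x ≤ 2) :
    (1 + x) ^ 2 / (Real.exp 1 ^ 2 * x) * (Real.exp (x / (1 + x)) - 1)
      * (1 + x) ^ (2 / x) ≤ 1 + 0.72 * x :=
  subcase_1_1_second_bound_general x hx0
end

section
/- For all real x with 0 < x ≤ 2, (1+x)^{2/x + 0.82} ≤ e^2. -/
/-!
Taking logarithms, the claim becomes `(2 + 0.82 x) log (1 + x) ≤ 2 x`. For odd `n` the alternating
Taylor polynomial of degree `n` bounds `log (1 + u)` from above on all of `u > -1`, since the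
remainder has derivative `-u ^ n / (1 + u)`, which changes sign only at `0`. On `(0, 0.45]` the
quintic at `x` is enough. Near `x = 2` the inequality is tight (the margin is about `10⁻³`), so
there we expand around `2` instead: `1 + x = 3 (1 + (x - 2) / 3)`, together with Mathlib's
nine-digit upper bound for `log 3`.
-/

open Real Set Finset

noncomputable def logOneAddTaylor (n : ℕ) (u : ℝ) : ℝ :=
  ∑ k ∈ range n, (-1) ^ k * u ^ (k + 1) / (k + 1)

theorem hasDerivAt_logOneAddTaylor (n : ℕ) (u : ℝ) :
    HasDerivAt (logOneAddTaylor n) (∑ k ∈ range n, (-u) ^ k) u := by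
  unfold logOneAddTaylor
  refine HasDerivAt.fun_sum fun k _ => ?_
  refine (((hasDerivAt_pow (k + 1) u).const_mul ((-1 : ℝ) ^ k)).div_const
    ((k : ℝ) + 1)).congr_deriv ?_
  rw [neg_pow, Nat.add_sub_cancel]
  field_simp
  push_cast
  ring

theorem hasDerivAt_log_one_add_sub_logOneAddTaylor (n : ℕ) {u : ℝ} (hu : -1 < u) :
    HasDerivAt (fun t => log (1 + t) - logOneAddTaylor n t) ((-u) ^ n / (1 + u)) u := by
  have h1u : 1 + u ≠ 0 := by linarith
  have hlog : HasDerivAt (fun t => log (1 + t)) (1 / (1 + u)) u := by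
    simpa using ((hasDerivAt_id u).const_add 1).log h1u
  refine (hlog.sub (hasDerivAt_logOneAddTaylor n u)).congr_deriv ?_
  have hgeom := geom_sum_mul (-u) n
  field_simp
  linear_combination hgeom

theorem log_one_add_le_logOneAddTaylor {n : ℕ} (hn : Odd n) {u : ℝ} (hu : -1 < u) :
    log (1 + u) ≤ logOneAddTaylor n u := by
  set R := fun t => log (1 + t) - logOneAddTaylor n t
  have hR : ∀ t, -1 < t → HasDerivAt R ((-t) ^ n / (1 + t)) t :=
    fun t ht => hasDerivAt_log_one_add_sub_logOneAddTaylor n ht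
  have hR0 : R 0 = 0 := by simp [R, logOneAddTaylor]
  suffices R u ≤ R 0 by simpa [R, hR0] using this
  rcases le_total u 0 with hu0 | hu0
  · have hmono : MonotoneOn R (Ioc (-1) 0) := by
      refine monotoneOn_of_hasDerivWithinAt_nonneg (convex_Ioc _ _)
        (fun t ht => (hR t ht.1).continuousAt.continuousWithinAt)
        (fun t ht => (hR t (interior_subset ht).1).hasDerivWithinAt) fun t ht => ?_
      rw [interior_Ioc] at ht
      have h1t : 0 < 1 + t := by linarith [ht.1]
      have hnt : 0 ≤ -t := by linarith [ht.2]
      positivity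
    exact hmono ⟨hu, hu0⟩ ⟨by norm_num, le_rfl⟩ hu0
  · have hanti : AntitoneOn R (Ici 0) := by
      refine antitoneOn_of_hasDerivWithinAt_nonpos (convex_Ici _)
        (fun t ht => (hR t (by linarith [mem_Ici.1 ht])).continuousAt.continuousWithinAt)
        (fun t ht => (hR t (by linarith [mem_Ici.1 (interior_subset ht)])).hasDerivWithinAt)
        fun t ht => ?_
      rw [interior_Ici] at ht
      have ht0 : 0 ≤ t := le_of_lt ht
      rw [hn.neg_pow, neg_div, neg_nonpos]
      positivity
    exact hanti self_mem_Ici hu0 hu0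

theorem two_add_mul_log_one_add_le_of_le {x : ℝ} (hx0 : 0 < x) (hx : x ≤ 0.45) :
    (2 + 0.82 * x) * log (1 + x) ≤ 2 * x := by
  have hpoly : (2 + 0.82 * x) * logOneAddTaylor 5 x ≤ 2 * x := by
    simp only [logOneAddTaylor, sum_range_succ, sum_range_zero]
    norm_num
    have : 0 ≤ x * (0.45 - x) := by nlinarith
    nlinarith [pow_pos hx0 2, pow_pos hx0 3, pow_pos hx0 4]
  calc (2 + 0.82 * x) * log (1 + x) ≤ (2 + 0.82 * x) * logOneAddTaylor 5 x := by
        gcongr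
        exact log_one_add_le_logOneAddTaylor (by decide) (by linarith)
    _ ≤ 2 * x := hpoly

theorem two_add_mul_log_one_add_le_of_ge {x : ℝ} (hx : 0.45 ≤ x) (hx2 : x ≤ 2) :
    (2 + 0.82 * x) * log (1 + x) ≤ 2 * x := by
  set u := (x - 2) / 3
  have hu : -1 < u := by simp only [u]; linarith
  have hsplit : log (1 + x) = log 3 + log (1 + u) := by
    rw [← log_mul (by norm_num) (by linarith)]
    congr 1
    simp only [u]
    ring
  have hpoly : (2 + 0.82 * x) * (1.0986122888 + logOneAddTaylor 5 u) ≤ 2 * x := by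
    simp only [logOneAddTaylor, sum_range_succ, sum_range_zero, u]
    norm_num
    nlinarith [mul_nonneg (sub_nonneg.2 hx) (sub_nonneg.2 hx2), sq_nonneg (x - 2),
      sq_nonneg ((x - 2) ^ 2)]
  calc (2 + 0.82 * x) * log (1 + x)
      ≤ (2 + 0.82 * x) * (1.0986122888 + logOneAddTaylor 5 u) := by
        rw [hsplit]
        gcongr
        · exact log_three_lt_d9.le
        · exact log_one_add_le_logOneAddTaylor (by decide) hu
    _ ≤ 2 * x := hpoly

theorem fact_one (x : ℝ) (hx0 : 0 < x) (hx2 : x ≤ 2) :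
    (1 + x) ^ (2 / x + 0.82) ≤ Real.exp 1 ^ 2 := by
  have hkey : (2 + 0.82 * x) * log (1 + x) ≤ 2 * x := by
    rcases le_total x 0.45 with hx | hx
    · exact two_add_mul_log_one_add_le_of_le hx0 hx
    · exact two_add_mul_log_one_add_le_of_ge hx hx2
  have hexponent : log (1 + x) * (2 / x + 0.82) ≤ 2 := by
    rw [show log (1 + x) * (2 / x + 0.82) = (2 + 0.82 * x) * log (1 + x) / x by field_simp,
      div_le_iff₀ hx0]
    linarith
  calc (1 + x) ^ (2 / x + 0.82) = exp (log (1 + x) * (2 / x + 0.82)) :=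
        rpow_def_of_pos (by linarith) _
    _ ≤ exp 2 := exp_le_exp.2 hexponent
    _ = exp 1 ^ 2 := by rw [← exp_nat_mul, Nat.cast_ofNat, mul_one]
end

section
/- For all real x with 0 ≤ x ≤ 2, (1+x)^{0.18} · (2 + x) ≤ 2 + 1.44·x. -/
private lemma bern (a : ℝ) (ha : 0 ≤ a) : a ^ (0.18 : ℝ) ≤ 0.18 * a + 0.82 := by
  have h := Real.geom_mean_le_arith_mean2_weighted (w₁ := 0.18) (w₂ := 0.82)
    (p₁ := a) (p₂ := 1) (by norm_num) (by norm_num) ha (by norm_num) (by norm_num)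
  simpa using h

private lemma const_bound (t c : ℝ) (ht : 0 ≤ t) (hc : 0 ≤ c) (h : t ^ (9 : ℕ) ≤ c ^ (50 : ℕ)) :
    t ^ (0.18 : ℝ) ≤ c := by
  have key : (t ^ (0.18 : ℝ)) ^ (50 : ℕ) = t ^ (9 : ℕ) := by
    rw [← Real.rpow_natCast (t ^ (0.18 : ℝ)) 50, ← Real.rpow_mul ht, ← Real.rpow_natCast t 9]
    norm_num
  refine le_of_pow_le_pow_left₀ (n := 50) (by norm_num) hc ?_
  rw [key]; exact h

private lemma tangent (y t c : ℝ) (hy : 0 ≤ y) (ht : 0 < t) (hc : t ^ (0.18 : ℝ) ≤ c) :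
    y ^ (0.18 : ℝ) ≤ c * (0.18 * (y / t) + 0.82) := by
  have hyt : (0 : ℝ) ≤ y / t := div_nonneg hy ht.le
  have h1 : y ^ (0.18 : ℝ) = t ^ (0.18 : ℝ) * (y / t) ^ (0.18 : ℝ) := by
    rw [← Real.mul_rpow ht.le hyt, mul_div_cancel₀ _ (ne_of_gt ht)]
  rw [h1]
  have h2 := bern (y / t) hyt
  have h3 : (0 : ℝ) ≤ t ^ (0.18 : ℝ) := Real.rpow_nonneg ht.le _
  have h4 : (0 : ℝ) ≤ 0.18 * (y / t) + 0.82 := by positivity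
  calc t ^ (0.18 : ℝ) * (y / t) ^ (0.18 : ℝ) ≤ t ^ (0.18 : ℝ) * (0.18 * (y / t) + 0.82) :=
        mul_le_mul_of_nonneg_left h2 h3
    _ ≤ c * (0.18 * (y / t) + 0.82) := mul_le_mul_of_nonneg_right hc h4

theorem rpow_linear_bound (x : ℝ) (hx0 : 0 ≤ x) (hx2 : x ≤ 2) :
    (1 + x) ^ (0.18 : ℝ) * (2 + x) ≤ 2 + 1.44 * x := by
  have hy : (0 : ℝ) ≤ 1 + x := by linarith
  have h2x : (0 : ℝ) ≤ 2 + x := by linarith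
  rcases le_or_gt x 0.4 with h | h
  · have hb := bern (1 + x) hy
    nlinarith [mul_nonneg hx0 hx0]
  · rcases le_or_gt x 1 with h1 | h1
    · have hc : (1.5 : ℝ) ^ (0.18 : ℝ) ≤ 1.076 :=
        const_bound 1.5 1.076 (by norm_num) (by norm_num) (by norm_num)
      have hb := tangent (1 + x) 1.5 1.076 hy (by norm_num) hc
      rw [show (1 + x) / (1.5 : ℝ) = (1 + x) * (1/1.5) by ring] at hb
      nlinarith [mul_nonneg (sub_nonneg.2 h.le) (sub_nonneg.2 h1)]
    · have hc : (3 : ℝ) ^ (0.18 : ℝ) ≤ 1.219 :=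
        const_bound 3 1.219 (by norm_num) (by norm_num) (by norm_num)
      have hb := tangent (1 + x) 3 1.219 hy (by norm_num) hc
      rw [show (1 + x) / (3 : ℝ) = (1 + x) * (1/3) by ring] at hb
      nlinarith [mul_nonneg (sub_nonneg.2 h1.le) (sub_nonneg.2 hx2)]
end

section
/- The function x ↦ (1+x)^{2/x+1} is increasing on (0, 2], and hence (1+x)^{2/x+1} ≤ 9 for all 0 < x ≤ 2. -/
/-!
Write `(1 + x) ^ (2 / x + 1) = exp (g x)` with `g x = (2 / x + 1) * log (1 + x)`. With `t = 1 + x`,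
`g' x ≥ 0` is equivalent to `log t ≤ (t - t⁻¹) / 2 = sinh (log t)`, which holds for `t ≥ 1`
because `u ≤ sinh u` for `u ≥ 0`. So the function is increasing on all of `(0, ∞)`, and its value
at `x = 2` is `3 ^ 2 = 9`.
-/

open Real Set

lemma Real.log_le_sub_inv_div_two {t : ℝ} (ht : 1 ≤ t) : log t ≤ (t - t⁻¹) / 2 := by
  rw [← sinh_log (by positivity)]
  exact self_le_sinh_iff.2 (log_nonneg ht)

lemma hasDerivAt_two_div_add_one_mul_log_one_add {x : ℝ} (hx : 0 < x) :
    HasDerivAt (fun x : ℝ => (2 / x + 1) * log (1 + x))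
      ((2 / x + 1) / (1 + x) - 2 / x ^ 2 * log (1 + x)) x := by
  have hinv : HasDerivAt (fun x : ℝ => 2 / x + 1) (-2 / x ^ 2) x := by
    simpa [div_eq_mul_inv] using ((hasDerivAt_inv hx.ne').const_mul 2).add_const 1
  have hlog : HasDerivAt (fun x : ℝ => log (1 + x)) (1 / (1 + x)) x := by
    simpa using ((hasDerivAt_id x).const_add 1).log (by positivity)
  exact (hinv.mul hlog).congr_deriv (by ring)

lemma two_div_sq_mul_log_one_add_le {x : ℝ} (hx : 0 < x) :
    2 / x ^ 2 * log (1 + x) ≤ (2 / x + 1) / (1 + x) := by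
  have hlog : log (1 + x) ≤ x * (x + 2) / (2 * (1 + x)) := by
    convert log_le_sub_inv_div_two (by linarith : (1 : ℝ) ≤ 1 + x) using 1
    field_simp
    ring
  calc 2 / x ^ 2 * log (1 + x) ≤ 2 / x ^ 2 * (x * (x + 2) / (2 * (1 + x))) := by gcongr
    _ = (2 / x + 1) / (1 + x) := by
        field_simp
        ring

lemma monotoneOn_two_div_add_one_mul_log_one_add :
    MonotoneOn (fun x : ℝ => (2 / x + 1) * log (1 + x)) (Ioi 0) := by
  have hderiv := fun x (hx : x ∈ Ioi (0 : ℝ)) => hasDerivAt_two_div_add_one_mul_log_one_add hx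
  exact monotoneOn_of_hasDerivWithinAt_nonneg (convex_Ioi 0)
    (fun x hx => (hderiv x hx).continuousAt.continuousWithinAt)
    (fun x hx => (hderiv x (interior_subset hx)).hasDerivWithinAt)
    (fun x hx => sub_nonneg.2 (two_div_sq_mul_log_one_add_le (interior_subset hx)))

lemma monotoneOn_one_add_rpow_two_div_add_one :
    MonotoneOn (fun x : ℝ => (1 + x) ^ (2 / x + 1)) (Ioi 0) := by
  refine (exp_monotone.comp_monotoneOn monotoneOn_two_div_add_one_mul_log_one_add).congr ?_
  intro x hx
  simp only [Function.comp_apply]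
  rw [rpow_def_of_pos (by linarith [mem_Ioi.1 hx]), mul_comm]

theorem rpow_mono_and_bound :
    MonotoneOn (fun x : ℝ => (1 + x) ^ (2 / x + 1)) (Set.Ioc 0 2)
    ∧ ∀ x : ℝ, 0 < x → x ≤ 2 → (1 + x) ^ (2 / x + 1) ≤ 9 := by
  refine ⟨monotoneOn_one_add_rpow_two_div_add_one.mono Ioc_subset_Ioi_self, fun x hx hx2 => ?_⟩
  calc (1 + x) ^ (2 / x + 1) ≤ (1 + 2 : ℝ) ^ (2 / 2 + 1 : ℝ) :=
        monotoneOn_one_add_rpow_two_div_add_one hx (mem_Ioi.2 two_pos) hx2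
    _ = 9 := by norm_num
end

section
/- The function x ↦ x·(1/x + 1/e - e^{-1/x}) is decreasing for x ≥ 1. -/
/-! The derivative of `x ↦ x * (1 / x + 1 / e - exp (-1 / x))` is `1 / e - (1 + z) * exp (-z)`
with `z = 1 / x`, and for `z ∈ [0, 1]` we have `exp (z - 1) ≤ 1 ≤ 1 + z`, i.e.
`1 / e ≤ (1 + z) * exp (-z)`. -/

open Real

lemma exp_neg_one_le_exp_neg_mul_one_add {z : ℝ} (hz0 : 0 ≤ z) (hz1 : z ≤ 1) :
    exp (-1) ≤ exp (-z) * (1 + z) := by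
  have hexp : exp (z - 1) ≤ 1 + z := by
    linarith [exp_le_one_iff.mpr (sub_nonpos.mpr hz1)]
  calc exp (-1) = exp (-z) * exp (z - 1) := by rw [← exp_add]; ring_nf
    _ ≤ exp (-z) * (1 + z) := mul_le_mul_of_nonneg_left hexp (exp_pos _).le

lemma hasDerivAt_mul_one_div_add_sub_exp_neg_one_div {x : ℝ} (hx : x ≠ 0) :
    HasDerivAt (fun x : ℝ => x * (1 / x + 1 / exp 1 - exp (-1 / x)))
      (1 / exp 1 - exp (-1 / x) * (1 + 1 / x)) x := by
  have hinv : HasDerivAt (fun x : ℝ => 1 / x) (-(1 / x ^ 2)) x := by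
    simpa only [one_div] using hasDerivAt_inv hx
  have hexp : HasDerivAt (fun x : ℝ => exp (-1 / x)) (exp (-1 / x) * (1 / x ^ 2)) x := by
    simpa only [neg_div, neg_neg] using hinv.fun_neg.exp
  refine ((hasDerivAt_id' x).fun_mul ((hinv.add_const (1 / exp 1)).fun_sub hexp)).congr_deriv ?_
  field_simp
  ring

theorem antitone_aux :
    AntitoneOn (fun x : ℝ => x * (1 / x + 1 / Real.exp 1 - Real.exp (-1 / x)))
      (Set.Ici 1) := by
  have hderiv : ∀ x ∈ Set.Ici (1 : ℝ), HasDerivAt _ _ x := fun x hx =>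
    hasDerivAt_mul_one_div_add_sub_exp_neg_one_div (zero_lt_one.trans_le hx).ne'
  refine antitoneOn_of_hasDerivWithinAt_nonpos (convex_Ici 1)
    (fun x hx => (hderiv x hx).continuousAt.continuousWithinAt)
    (fun x hx => (hderiv x (interior_subset hx)).hasDerivWithinAt) fun x hx => ?_
  have hx1 : 1 ≤ x := interior_subset hx
  have hx0 : 0 < x := zero_lt_one.trans_le hx1
  have key := exp_neg_one_le_exp_neg_mul_one_add (one_div_nonneg.mpr hx0.le)
    ((div_le_one hx0).mpr hx1)
  rw [exp_neg, ← one_div, ← neg_div] at key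
  exact sub_nonpos.mpr key
end
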